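/- Let p ∈ [-1,1] be a nonzero real number, let 𝒜 and ℬ be unital C*-algebras, and let φ : 𝒜⁺⁺ → ℬ⁺⁺ be a norm-continuous bijective map satisfying φ(A 𝔪ₚ B) = φ(A) 𝔪ₚ φ(B) for all A, B ∈ 𝒜⁺⁺. Then φ is positively homogeneous: φ(tA) = t φ(A) for every real t > 0 and every A ∈ 𝒜⁺⁺. -/

import Mathlib

/-!
For `p > 0` put `κ = 2^(-1/p)`. Writing `A 𝔪ₚ B = A^(1/2) f(A^(-1/2) B A^(-1/2)) A^(1/2)` with
`f x = ((1 + x^p)/2)^(1/p)` shows that `B ↦ A 𝔪ₚ B` extends continuously to `B = 0` with value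
`κ A`, dominates `κ B`, and has a continuous left inverse. Pushing `s • A → 0` through `φ`, the
points `φ (s • A)` converge to a limit `L` that does not depend on `A`; the bound
`κ φ(s • A) ≤ φ C 𝔪ₚ φ(s • A)` and surjectivity give `κ L ≤ Y` for every `Y ∈ ℬ⁺⁺`, so `L = 0`
and `φ (κ C) = κ φ C`. Since `(s C) 𝔪ₚ (t C) = Mₚ(s, t) C` for the scalar power mean `Mₚ`, the
set of `x > 0` at which `φ` is homogeneous at `x^(1/p)` contains `1` and `1/2` and is closed under
products, midpoints, the reflection `x, (x + z)/2 ↦ z` (injectivity of the mean) and limits; it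
therefore contains the positive dyadic rationals and hence all of `(0, ∞)`. For `p < 0`,
`A ↦ φ(A⁻¹)⁻¹` preserves `𝔪₋ₚ`, because inversion exchanges `𝔪ₚ` and `𝔪₋ₚ`.
-/

open scoped NNReal

/-- The positive definite cone of a unital C*-algebra: the invertible positive elements. -/
def posDefCone (A : Type*) [CStarAlgebra A] [PartialOrder A] [StarOrderedRing A] : Set A :=
  {a : A | 0 ≤ a ∧ IsUnit a}

variable {A B : Type*} [CStarAlgebra A] [PartialOrder A] [StarOrderedRing A]
  [CStarAlgebra B] [PartialOrder B] [StarOrderedRing B]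

/-- The Kubo–Ando `p`-th power mean
`a^(1/2) ((1 + (a^(-1/2) b a^(-1/2))^p)/2)^(1/p) a^(1/2)` on the positive definite cone. -/
noncomputable def kuboAndoPowerMean (p : ℝ) (a b : A) : A :=
  a ^ ((2 : ℝ)⁻¹) *
    ((2 : ℝ)⁻¹ • (1 + (a ^ (-(2 : ℝ)⁻¹) * b * a ^ (-(2 : ℝ)⁻¹)) ^ p)) ^ p⁻¹ *
    a ^ ((2 : ℝ)⁻¹)

open Filter Topology CFC
open scoped Ring

noncomputable def powerMean (p s t : ℝ) : ℝ := (2⁻¹ * (s ^ p + t ^ p)) ^ p⁻¹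

-- Inverts `powerMean p 1` on `[0, ∞)` when `p > 0`; the `max` only makes it continuous on `ℝ`.
noncomputable def powerMeanOneInv (p y : ℝ) : ℝ := max (2 * y ^ p - 1) 0 ^ p⁻¹

section PowerMean

variable {p : ℝ}

lemma continuous_powerMean_one (hp : 0 < p) : Continuous (powerMean p 1) := by
  unfold powerMean
  exact (continuous_const.mul (continuous_const.add (Real.continuous_rpow_const hp.le))).rpow_const
    fun _ => Or.inr (inv_nonneg.2 hp.le)

lemma continuous_powerMeanOneInv (hp : 0 < p) : Continuous (powerMeanOneInv p) := by
  unfold powerMeanOneInv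
  exact (((continuous_const.mul (Real.continuous_rpow_const hp.le)).sub continuous_const).max
    continuous_const).rpow_const fun _ => Or.inr (inv_nonneg.2 hp.le)

lemma powerMean_one_zero (hp : 0 < p) : powerMean p 1 0 = 2⁻¹ ^ p⁻¹ := by
  simp [powerMean, Real.zero_rpow hp.ne']

lemma powerMeanOneInv_powerMean_one (hp : 0 < p) {x : ℝ} (hx : 0 ≤ x) :
    powerMeanOneInv p (powerMean p 1 x) = x := by
  have hxp : 0 ≤ x ^ p := Real.rpow_nonneg hx p
  rw [powerMean, powerMeanOneInv, Real.one_rpow, Real.rpow_inv_rpow (by positivity) hp.ne']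
  rw [show 2 * (2⁻¹ * (1 + x ^ p)) - 1 = x ^ p by ring, max_eq_left hxp,
    Real.rpow_rpow_inv hx hp.ne']

lemma powerMean_one_pos {x : ℝ} (hx : 0 ≤ x) : 0 < powerMean p 1 x := by
  have := Real.rpow_nonneg hx p
  unfold powerMean
  positivity

lemma mul_le_powerMean_one (hp : 0 < p) {x : ℝ} (hx : 0 ≤ x) :
    powerMean p 1 0 * x ≤ powerMean p 1 x := by
  have hxp : 0 ≤ x ^ p := Real.rpow_nonneg hx p
  calc powerMean p 1 0 * x = (2⁻¹ * x ^ p) ^ p⁻¹ := by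
        rw [powerMean_one_zero hp, Real.mul_rpow (by norm_num) hxp, Real.rpow_rpow_inv hx hp.ne']
    _ ≤ powerMean p 1 x := by
        unfold powerMean
        gcongr
        simp

lemma mul_powerMean (hp : p ≠ 0) {r s t : ℝ} (hr : 0 ≤ r) (hs : 0 ≤ s) (ht : 0 ≤ t) :
    r * powerMean p s t = powerMean p (r * s) (r * t) := by
  unfold powerMean
  rw [Real.mul_rpow hr hs, Real.mul_rpow hr ht, ← mul_add, mul_left_comm,
    Real.mul_rpow (Real.rpow_nonneg hr p) (by positivity), Real.rpow_rpow_inv hr hp]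

lemma powerMean_rpow_inv (hp : p ≠ 0) {x y : ℝ} (hx : 0 ≤ x) (hy : 0 ≤ y) :
    powerMean p (x ^ p⁻¹) (y ^ p⁻¹) = (2⁻¹ * (x + y)) ^ p⁻¹ := by
  rw [powerMean, Real.rpow_inv_rpow hx hp, Real.rpow_inv_rpow hy hp]

end PowerMean

theorem Set.Ioi_zero_subset_of_mul_mem_of_midpoint_mem {S : Set ℝ} (h_one : 1 ∈ S)
    (h_half : 2⁻¹ ∈ S) (h_mul : ∀ x ∈ S, ∀ y ∈ S, x * y ∈ S)
    (h_mid : ∀ x ∈ S, ∀ y ∈ S, 2⁻¹ * (x + y) ∈ S)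
    (h_reflect : ∀ x ∈ S, ∀ z, 0 < z → 2⁻¹ * (x + z) ∈ S → z ∈ S)
    (h_closed : closure S ∩ Set.Ioi 0 ⊆ S) : Set.Ioi 0 ⊆ S := by
  have h_three_halves : 3 / 2 ∈ S := h_reflect _ h_half _ (by norm_num) (by norm_num [h_one])
  have h_two : 2 ∈ S := h_reflect _ h_one _ two_pos (by norm_num [h_three_halves])
  have h_add : ∀ x ∈ S, ∀ y ∈ S, x + y ∈ S := fun x hx y hy => by
    simpa using h_mul _ h_two _ (h_mid x hx y hy)
  have h_nat : ∀ n : ℕ, (n + 1 : ℝ) ∈ S := by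
    intro n
    induction n with
    | zero => simpa using h_one
    | succ n ih => simpa using h_add _ ih _ h_one
  have h_pow : ∀ k : ℕ, (2⁻¹ : ℝ) ^ k ∈ S := by
    intro k
    induction k with
    | zero => simpa using h_one
    | succ k ih => simpa [pow_succ] using h_mul _ ih _ h_half
  intro x hx
  refine h_closed ⟨?_, hx⟩
  have h2k : Tendsto (fun k : ℕ => (2 : ℝ) ^ k) atTop atTop :=
    tendsto_pow_atTop_atTop_of_one_lt one_lt_two
  refine mem_closure_of_tendsto ((tendsto_nat_ceil_mul_div_atTop (le_of_lt hx)).comp h2k)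
    (Eventually.of_forall fun k => ?_)
  obtain ⟨n, hn⟩ := Nat.exists_eq_add_one_of_ne_zero
    (Nat.ceil_pos.2 (mul_pos hx (pow_pos (two_pos (α := ℝ)) k))).ne'
  simpa [hn, div_eq_mul_inv] using h_mul _ (h_nat n) _ (h_pow k)

lemma rpow_two_inv_eq_sqrt (a : A) : a ^ (2 : ℝ)⁻¹ = sqrt a := by
  rw [sqrt_eq_rpow, one_div]

lemma rpow_neg_two_inv_eq_sqrt_inverse {a : A} (ha : IsStrictlyPositive a) :
    a ^ (-(2 : ℝ)⁻¹) = sqrt a⁻¹ʳ := by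
  rw [sqrt_eq_rpow, inverse_eq_rpow_neg_one, rpow_rpow _ _ _ (by norm_num)]
  norm_num

lemma conjSqrt_nonneg (c : A) {b : A} (hb : 0 ≤ b) : 0 ≤ conjSqrt c b := by
  simpa using conjSqrt_monotone (c := c) hb

lemma isSelfAdjoint_conjSqrt (c : A) {y : A} (hy : IsSelfAdjoint y) :
    IsSelfAdjoint (conjSqrt c y) :=
  hy.conjugate_self (sqrt_nonneg c).isSelfAdjoint

lemma conjSqrt_smul {r : ℝ} (hr : 0 ≤ r) {c : A} (hc : 0 ≤ c) (x : A) :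
    conjSqrt (r • c) x = r • conjSqrt c x := by
  have hsqrt : sqrt (r • c) = √r • sqrt c := sqrt_unique (by
    rw [smul_mul_smul_comm, Real.mul_self_sqrt hr, sqrt_mul_sqrt_self c]) (smul_nonneg
      (Real.sqrt_nonneg r) (sqrt_nonneg c))
  rw [conjSqrt_apply, conjSqrt_apply, hsqrt, smul_mul_assoc, smul_mul_smul_comm,
    Real.mul_self_sqrt hr]

lemma Ring.inverse_smul {𝕜 R : Type*} [Field 𝕜] [Ring R] [Algebra 𝕜 R] {r : 𝕜} (hr : r ≠ 0)
    {c : R} (hc : IsUnit c) :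
    (r • c)⁻¹ʳ = r⁻¹ • c⁻¹ʳ := by
  have hrc : IsUnit (r • c) := (hc.smul (Units.mk0 r hr) :)
  calc (r • c)⁻¹ʳ = (r • c)⁻¹ʳ * ((r • c) * (r⁻¹ • c⁻¹ʳ)) := by
        rw [smul_mul_smul_comm, mul_inv_cancel₀ hr, Ring.mul_inverse_cancel c hc, one_smul,
          mul_one]
    _ = r⁻¹ • c⁻¹ʳ := Ring.inverse_mul_cancel_left _ _ hrc

lemma continuousOn_cfc_of_continuous {E : Type*} [CStarAlgebra E] {f : ℝ → ℝ}
    (hf : Continuous f) : ContinuousOn (cfc f : E → E) {a | IsSelfAdjoint a} :=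
  ContinuousOn.cfc_of_mem_nhdsSet (s := Set.univ) f (by simp) continuousOn_id (fun _ h => h)
    hf.continuousOn

lemma nonpos_of_forall_isStrictlyPositive_le {x : A} (h : ∀ y : A, IsStrictlyPositive y → x ≤ y) :
    x ≤ 0 := by
  have hlim : Tendsto (fun ε : ℝ => ε • (1 : A)) (𝓝[>] 0) (𝓝 0) := by
    simpa using
      (tendsto_nhdsWithin_of_tendsto_nhds (tendsto_id (x := 𝓝 (0 : ℝ)))).smul_const (1 : A)
  exact ge_of_tendsto hlim (eventually_nhdsWithin_of_forall fun ε hε =>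
    h _ (isStrictlyPositive_one.smul hε))

lemma bijOn_inverse_posDefCone :
    Set.BijOn (Ring.inverse : A → A) (posDefCone A) (posDefCone A) :=
  Set.InvOn.bijOn ⟨fun _ ha => Ring.inverse_inverse ha.2, fun _ ha => Ring.inverse_inverse ha.2⟩
    (fun _ ha => IsStrictlyPositive.ringInverse ha) (fun _ ha => IsStrictlyPositive.ringInverse ha)

lemma continuousOn_inverse_posDefCone : ContinuousOn (Ring.inverse : A → A) (posDefCone A) :=
  fun _ ha => (NormedRing.inverse_continuousAt ha.2.unit).continuousWithinAt

section KuboAndoMean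

variable {p : ℝ}

lemma kuboAndoPowerMean_eq_conjSqrt_rpow {a : A} (ha : IsStrictlyPositive a) (b : A) :
    kuboAndoPowerMean p a b = conjSqrt a (((2 : ℝ)⁻¹ • (1 + conjSqrt a⁻¹ʳ b ^ p)) ^ p⁻¹) := by
  rw [kuboAndoPowerMean, rpow_neg_two_inv_eq_sqrt_inverse ha, rpow_two_inv_eq_sqrt,
    ← conjSqrt_apply, ← conjSqrt_apply]

lemma kuboAndoPowerMean_eq_conjSqrt_cfc (hp : 0 < p) {a b : A} (ha : IsStrictlyPositive a)
    (hb : 0 ≤ b) :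
    kuboAndoPowerMean p a b = conjSqrt a (cfc (powerMean p 1) (conjSqrt a⁻¹ʳ b)) := by
  have hX := conjSqrt_nonneg a⁻¹ʳ hb
  have hcont : Continuous fun x : ℝ => x ^ p := Real.continuous_rpow_const hp.le
  have hbase : (2 : ℝ)⁻¹ • (1 + conjSqrt a⁻¹ʳ b ^ p) =
      cfc (fun x : ℝ => 2⁻¹ * (1 + x ^ p)) (conjSqrt a⁻¹ʳ b) := by
    rw [rpow_eq_cfc_real hX, cfc_const_mul _ _ _, cfc_const_add _ _ _, map_one]
  rw [kuboAndoPowerMean_eq_conjSqrt_rpow ha, hbase, cfc_rpow]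
  · unfold powerMean
    simp only [Real.one_rpow]
  · intro x hx
    have := spectrum_nonneg_of_nonneg hX hx
    positivity

lemma isStrictlyPositive_kuboAndoPowerMean (hp : 0 < p) {a b : A} (ha : IsStrictlyPositive a)
    (hb : IsStrictlyPositive b) : IsStrictlyPositive (kuboAndoPowerMean p a b) := by
  have hX := conjSqrt_nonneg a⁻¹ʳ hb.nonneg
  rw [kuboAndoPowerMean_eq_conjSqrt_cfc hp ha hb.nonneg, isStrictlyPositive_conjSqrt_iff _ _ ha,
    cfc_isStrictlyPositive_iff _ _ (continuous_powerMean_one hp).continuousOn hX.isSelfAdjoint]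
  exact fun x hx => powerMean_one_pos (spectrum_nonneg_of_nonneg hX hx)

lemma kuboAndoPowerMean_self_smul (hp : 0 < p) {c : A} (hc : IsStrictlyPositive c) {t : ℝ}
    (ht : 0 ≤ t) : kuboAndoPowerMean p c (t • c) = powerMean p 1 t • c := by
  rw [kuboAndoPowerMean_eq_conjSqrt_cfc hp hc (smul_nonneg ht hc.nonneg), map_smul,
    conjSqrt_ringInverse_self c, ← Algebra.algebraMap_eq_smul_one, cfc_algebraMap,
    Algebra.algebraMap_eq_smul_one, map_smul, conjSqrt_one c]

lemma smul_le_kuboAndoPowerMean (hp : 0 < p) {a b : A} (ha : IsStrictlyPositive a) (hb : 0 ≤ b) :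
    powerMean p 1 0 • b ≤ kuboAndoPowerMean p a b := by
  have hX := conjSqrt_nonneg a⁻¹ʳ hb
  have hf := continuous_powerMean_one hp
  have hle : powerMean p 1 0 • conjSqrt a⁻¹ʳ b ≤ cfc (powerMean p 1) (conjSqrt a⁻¹ʳ b) := by
    rw [← cfc_const_mul_id _ _ hX.isSelfAdjoint]
    exact cfc_mono fun x hx => mul_le_powerMean_one hp (spectrum_nonneg_of_nonneg hX hx)
  rw [kuboAndoPowerMean_eq_conjSqrt_cfc hp ha hb]
  simpa [conjSqrt_conjSqrt_ringInverse a b ha] using conjSqrt_monotone (c := a) hle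

lemma continuousOn_kuboAndoPowerMean_right (hp : 0 < p) {a : A} (ha : IsStrictlyPositive a) :
    ContinuousOn (kuboAndoPowerMean p a) {b | 0 ≤ b} := by
  refine ContinuousOn.congr ?_ fun b hb => kuboAndoPowerMean_eq_conjSqrt_cfc hp ha hb
  exact (conjSqrt a).continuous.comp_continuousOn
    ((continuousOn_cfc_of_continuous (continuous_powerMean_one hp)).comp
      (conjSqrt a⁻¹ʳ).continuous.continuousOn fun b hb => (conjSqrt_nonneg _ hb).isSelfAdjoint)

lemma exists_continuousOn_leftInvOn_kuboAndoPowerMean (hp : 0 < p) {a : A}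
    (ha : IsStrictlyPositive a) :
    ∃ g : A → A, ContinuousOn g {y | IsSelfAdjoint y} ∧
      Set.LeftInvOn g (kuboAndoPowerMean p a) {b | 0 ≤ b} := by
  refine ⟨fun y => conjSqrt a (cfc (powerMeanOneInv p) (conjSqrt a⁻¹ʳ y)), ?_, fun b hb => ?_⟩
  · exact (conjSqrt a).continuous.comp_continuousOn
      ((continuousOn_cfc_of_continuous (continuous_powerMeanOneInv hp)).comp
        (conjSqrt a⁻¹ʳ).continuous.continuousOn fun y hy => isSelfAdjoint_conjSqrt _ hy)
  have hX := conjSqrt_nonneg a⁻¹ʳ hb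
  have hf := continuous_powerMean_one hp
  have hf_inv := continuous_powerMeanOneInv hp
  dsimp only
  rw [kuboAndoPowerMean_eq_conjSqrt_cfc hp ha hb, conjSqrt_ringInverse_conjSqrt a _ ha,
    ← cfc_comp' _ _ _, cfc_congr (g := fun x => x) fun x hx =>
      powerMeanOneInv_powerMean_one hp (spectrum_nonneg_of_nonneg hX hx),
    cfc_id' ℝ _, conjSqrt_conjSqrt_ringInverse a b ha]

lemma kuboAndoPowerMean_smul {r : ℝ} (hr : 0 < r) {a : A} (ha : IsStrictlyPositive a) (b : A) :
    kuboAndoPowerMean p (r • a) (r • b) = r • kuboAndoPowerMean p a b := by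
  rw [kuboAndoPowerMean_eq_conjSqrt_rpow (ha.smul hr), kuboAndoPowerMean_eq_conjSqrt_rpow ha,
    Ring.inverse_smul hr.ne' ha.isUnit, conjSqrt_smul (inv_nonneg.2 hr.le) ha.ringInverse.nonneg,
    map_smul, smul_smul, inv_mul_cancel₀ hr.ne', one_smul, conjSqrt_smul hr.le ha.nonneg]

lemma kuboAndoPowerMean_smul_smul (hp : 0 < p) {c : A} (hc : IsStrictlyPositive c) {s t : ℝ}
    (hs : 0 < s) (ht : 0 ≤ t) : kuboAndoPowerMean p (s • c) (t • c) = powerMean p s t • c := by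
  calc kuboAndoPowerMean p (s • c) (t • c) = kuboAndoPowerMean p (s • c) (s • (t / s) • c) := by
        rw [smul_smul, mul_div_cancel₀ t hs.ne']
    _ = (s * powerMean p 1 (t / s)) • c := by
        rw [kuboAndoPowerMean_smul hs hc, kuboAndoPowerMean_self_smul hp hc (by positivity),
          smul_smul]
    _ = powerMean p s t • c := by
        rw [mul_powerMean hp.ne' hs.le zero_le_one (by positivity), mul_one,
          mul_div_cancel₀ t hs.ne']

lemma inverse_kuboAndoPowerMean (hp : p ≠ 0) {a b : A} (ha : IsStrictlyPositive a)
    (hb : IsStrictlyPositive b) :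
    (kuboAndoPowerMean p a b)⁻¹ʳ = kuboAndoPowerMean (-p) a⁻¹ʳ b⁻¹ʳ := by
  set X := conjSqrt a⁻¹ʳ b
  have hX : IsStrictlyPositive X := (isStrictlyPositive_conjSqrt_iff _ _ ha.ringInverse).2 hb
  have hZ : IsStrictlyPositive ((2 : ℝ)⁻¹ • (1 + X ^ p)) :=
    (isStrictlyPositive_one.add_nonneg rpow_nonneg).smul (by norm_num)
  have hXinv : conjSqrt a⁻¹ʳ⁻¹ʳ b⁻¹ʳ = X⁻¹ʳ := (ringInverse_conjSqrt _ _ ha.ringInverse).symm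
  have hXp : X⁻¹ʳ ^ (-p) = X ^ p := by
    rw [inverse_eq_rpow_neg_one, rpow_rpow _ _ _ (by norm_num), neg_one_mul, neg_neg]
  rw [kuboAndoPowerMean_eq_conjSqrt_rpow ha, kuboAndoPowerMean_eq_conjSqrt_rpow ha.ringInverse,
    ringInverse_conjSqrt _ _ ha, hXinv, hXp, inverse_rpow _ _ (inv_ne_zero hp), inv_neg]

end KuboAndoMean

structure IsPowerMeanPreserver (p : ℝ) (φ : A → B) : Prop where
  continuousOn : ContinuousOn φ (posDefCone A)
  bijOn : Set.BijOn φ (posDefCone A) (posDefCone B)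
  map_kuboAndoPowerMean : ∀ a ∈ posDefCone A, ∀ b ∈ posDefCone A,
    φ (kuboAndoPowerMean p a b) = kuboAndoPowerMean p (φ a) (φ b)

def IsHomogeneousAt {F : Type*} [SMul ℝ F] (φ : A → F) (t : ℝ) : Prop :=
  ∀ c ∈ posDefCone A, φ (t • c) = t • φ c

lemma IsHomogeneousAt.mul {F : Type*} [MulAction ℝ F] {φ : A → F} {s t : ℝ}
    (hs : IsHomogeneousAt φ s) (ht : IsHomogeneousAt φ t) (ht_pos : 0 < t) :
    IsHomogeneousAt φ (s * t) := fun c hc => by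
  rw [mul_smul, hs _ (IsStrictlyPositive.smul ht_pos hc), ht c hc, smul_smul]

lemma IsHomogeneousAt.of_ringInverse_conj {φ : A → B}
    (hφ : Set.MapsTo φ (posDefCone A) (posDefCone B)) {t : ℝ} (ht : 0 < t)
    (h : IsHomogeneousAt (fun a => (φ a⁻¹ʳ)⁻¹ʳ) t⁻¹) : IsHomogeneousAt φ t := fun c hc => by
  have hc' : IsStrictlyPositive c := hc
  have htc : IsStrictlyPositive (t • c) := hc'.smul ht
  have hφc : IsStrictlyPositive (φ c) := hφ hc
  have hφtc : IsStrictlyPositive (φ (t • c)) := hφ htc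
  have h' := h c⁻¹ʳ hc'.ringInverse
  simp only [Ring.inverse_smul (inv_ne_zero ht.ne') hc'.ringInverse.isUnit, inv_inv,
    Ring.inverse_inverse hc'.isUnit] at h'
  rw [← Ring.inverse_inverse hφtc.isUnit, h', ← Ring.inverse_smul ht.ne' hφc.isUnit,
    Ring.inverse_inverse (hφc.smul ht).isUnit]

namespace IsPowerMeanPreserver

variable {p : ℝ} {φ : A → B}

lemma isStrictlyPositive_map (hφ : IsPowerMeanPreserver p φ) {a : A}
    (ha : IsStrictlyPositive a) : IsStrictlyPositive (φ a) :=
  hφ.bijOn.mapsTo ha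

lemma eventually_isStrictlyPositive_map_smul (hφ : IsPowerMeanPreserver p φ) {a : A}
    (ha : IsStrictlyPositive a) : ∀ᶠ s : ℝ in 𝓝[>] 0, IsStrictlyPositive (φ (s • a)) :=
  eventually_nhdsWithin_of_forall fun _ hs => hφ.isStrictlyPositive_map (ha.smul hs)

lemma tendsto_kuboAndoPowerMean_map_smul (hp : 0 < p) (hφ : IsPowerMeanPreserver p φ) {c a : A}
    (hc : c ∈ posDefCone A) (ha : a ∈ posDefCone A) :
    Tendsto (fun s : ℝ => kuboAndoPowerMean p (φ c) (φ (s • a))) (𝓝[>] 0)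
      (𝓝 (φ (powerMean p 1 0 • c))) := by
  have hmem : ∀ᶠ s : ℝ in 𝓝[>] 0, s • a ∈ posDefCone A :=
    eventually_nhdsWithin_of_forall fun s hs => IsStrictlyPositive.smul hs ha
  have hsmul : Tendsto (fun s : ℝ => s • a) (𝓝[>] 0) (𝓝[{b | 0 ≤ b}] 0) := by
    refine tendsto_nhdsWithin_iff.2 ⟨?_, hmem.mono fun s hs => hs.1⟩
    simpa using (tendsto_nhdsWithin_of_tendsto_nhds (tendsto_id (x := 𝓝 (0 : ℝ)))).smul_const a
  have hmean : Tendsto (fun s : ℝ => kuboAndoPowerMean p c (s • a)) (𝓝[>] 0)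
      (𝓝[posDefCone A] (powerMean p 1 0 • c)) := by
    refine tendsto_nhdsWithin_iff.2 ⟨?_, hmem.mono fun s hs =>
      isStrictlyPositive_kuboAndoPowerMean hp hc hs⟩
    have h0 := (continuousOn_kuboAndoPowerMean_right hp hc 0 le_rfl).tendsto.comp hsmul
    rwa [← zero_smul ℝ c, kuboAndoPowerMean_self_smul hp hc le_rfl] at h0
  refine ((hφ.continuousOn _ ((IsStrictlyPositive.smul (powerMean_one_pos le_rfl) hc))).tendsto.comp
    hmean).congr' (hmem.mono fun s hs => ?_)
  exact hφ.map_kuboAndoPowerMean c hc _ hs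

lemma exists_tendsto_map_smul (hp : 0 < p) (hφ : IsPowerMeanPreserver p φ) :
    ∃ L : B, ∀ a ∈ posDefCone A, Tendsto (fun s : ℝ => φ (s • a)) (𝓝[>] 0) (𝓝 L) := by
  have hφ1 := hφ.isStrictlyPositive_map isStrictlyPositive_one
  obtain ⟨g, hg, hgφ⟩ := exists_continuousOn_leftInvOn_kuboAndoPowerMean hp hφ1
  have hκ := hφ.isStrictlyPositive_map
    (isStrictlyPositive_one.smul (powerMean_one_pos (p := p) le_rfl))
  refine ⟨g (φ (powerMean p 1 0 • 1)), fun a ha => ?_⟩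
  have hmem := hφ.eventually_isStrictlyPositive_map_smul ha
  have hlim := tendsto_kuboAndoPowerMean_map_smul hp hφ isStrictlyPositive_one ha
  refine ((hg _ hκ.isSelfAdjoint).tendsto.comp (tendsto_nhdsWithin_iff.2 ⟨hlim, hmem.mono
    fun s hs => (isStrictlyPositive_kuboAndoPowerMean hp hφ1 hs).isSelfAdjoint⟩)).congr'
    (hmem.mono fun s hs => hgφ hs.nonneg)

lemma tendsto_map_smul_zero (hp : 0 < p) (hφ : IsPowerMeanPreserver p φ) {a : A}
    (ha : a ∈ posDefCone A) : Tendsto (fun s : ℝ => φ (s • a)) (𝓝[>] 0) (𝓝 0) := by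
  obtain ⟨L, hL⟩ := hφ.exists_tendsto_map_smul hp
  have hmem : ∀ c ∈ posDefCone A, ∀ᶠ s : ℝ in 𝓝[>] 0, IsStrictlyPositive (φ (s • c)) :=
    fun c hc => hφ.eventually_isStrictlyPositive_map_smul hc
  have hL_nonneg : 0 ≤ L := ge_of_tendsto (hL a ha) ((hmem a ha).mono fun s hs => hs.nonneg)
  have hκ : 0 < powerMean p 1 0 := powerMean_one_pos le_rfl
  have hκL_le : ∀ c ∈ posDefCone A, powerMean p 1 0 • L ≤ φ (powerMean p 1 0 • c) := fun c hc =>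
    le_of_tendsto_of_tendsto ((hL c hc).const_smul _)
      (tendsto_kuboAndoPowerMean_map_smul hp hφ hc hc)
      ((hmem c hc).mono fun _ hs =>
        smul_le_kuboAndoPowerMean hp (hφ.isStrictlyPositive_map hc) hs.nonneg)
  have hκL_nonpos : powerMean p 1 0 • L ≤ 0 := by
    refine nonpos_of_forall_isStrictlyPositive_le fun y hy => ?_
    obtain ⟨c, hc, rfl⟩ := hφ.bijOn.surjOn hy
    simpa [smul_smul, hκ.ne'] using hκL_le _ (IsStrictlyPositive.smul (inv_pos.2 hκ) hc)
  have hL0 : L = 0 := le_antisymm ((smul_nonpos_iff_nonpos_of_pos_left hκ).1 hκL_nonpos) hL_nonneg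
  exact hL0 ▸ hL a ha

lemma isHomogeneousAt_powerMean_one_zero (hp : 0 < p) (hφ : IsPowerMeanPreserver p φ) :
    IsHomogeneousAt φ (powerMean p 1 0) := by
  intro c hc
  have hφc := hφ.isStrictlyPositive_map hc
  have hlim : Tendsto (fun s : ℝ => φ (s • c)) (𝓝[>] 0) (𝓝[{b | 0 ≤ b}] 0) :=
    tendsto_nhdsWithin_iff.2 ⟨hφ.tendsto_map_smul_zero hp hc,
      (hφ.eventually_isStrictlyPositive_map_smul hc).mono fun _ hs => hs.nonneg⟩
  have h0 := (continuousOn_kuboAndoPowerMean_right hp hφc 0 le_rfl).tendsto.comp hlim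
  rw [← zero_smul ℝ (φ c), kuboAndoPowerMean_self_smul hp hφc le_rfl] at h0
  exact tendsto_nhds_unique (tendsto_kuboAndoPowerMean_map_smul hp hφ hc hc) h0

lemma isHomogeneousAt_powerMean (hp : 0 < p) (hφ : IsPowerMeanPreserver p φ) {s t : ℝ}
    (hs : 0 < s) (ht : 0 < t) (hsφ : IsHomogeneousAt φ s) (htφ : IsHomogeneousAt φ t) :
    IsHomogeneousAt φ (powerMean p s t) := fun c hc => by
  have hφc := hφ.isStrictlyPositive_map hc
  rw [← kuboAndoPowerMean_smul_smul hp hc hs ht.le,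
    hφ.map_kuboAndoPowerMean _ (IsStrictlyPositive.smul hs hc) _ (IsStrictlyPositive.smul ht hc),
    hsφ c hc, htφ c hc, kuboAndoPowerMean_smul_smul hp hφc hs ht.le]

lemma isHomogeneousAt_of_powerMean (hp : 0 < p) (hφ : IsPowerMeanPreserver p φ) {s t : ℝ}
    (hs : 0 < s) (ht : 0 < t) (hsφ : IsHomogeneousAt φ s)
    (hmφ : IsHomogeneousAt φ (powerMean p s t)) : IsHomogeneousAt φ t := fun c hc => by
  have hφc := hφ.isStrictlyPositive_map hc
  obtain ⟨g, -, hg⟩ := exists_continuousOn_leftInvOn_kuboAndoPowerMean hp (hφc.smul hs)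
  refine hg.injOn (hφ.isStrictlyPositive_map (IsStrictlyPositive.smul ht hc)).nonneg
    (smul_nonneg ht.le hφc.nonneg) ?_
  calc kuboAndoPowerMean p (s • φ c) (φ (t • c)) = φ (kuboAndoPowerMean p (s • c) (t • c)) := by
        rw [hφ.map_kuboAndoPowerMean _ (IsStrictlyPositive.smul hs hc) _
          (IsStrictlyPositive.smul ht hc), hsφ c hc]
    _ = kuboAndoPowerMean p (s • φ c) (t • φ c) := by
        rw [kuboAndoPowerMean_smul_smul hp hc hs ht.le, hmφ c hc,
          kuboAndoPowerMean_smul_smul hp hφc hs ht.le]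

lemma closure_isHomogeneousAt_rpow_inv_subset (hφ : IsPowerMeanPreserver p φ) :
    closure {x : ℝ | 0 < x ∧ IsHomogeneousAt φ (x ^ p⁻¹)} ∩ Set.Ioi 0 ⊆
      {x : ℝ | 0 < x ∧ IsHomogeneousAt φ (x ^ p⁻¹)} := by
  rintro x ⟨hx, hx_pos⟩
  refine ⟨hx_pos, fun c hc => ?_⟩
  have hrpow : ContinuousOn (fun y : ℝ => y ^ p⁻¹) (Set.Ioi 0) := fun y hy =>
    (Real.continuousAt_rpow_const y p⁻¹ (Or.inl (ne_of_gt hy))).continuousWithinAt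
  have hmaps : Set.MapsTo (fun y : ℝ => y ^ p⁻¹ • c) (Set.Ioi 0) (posDefCone A) := fun y hy =>
    IsStrictlyPositive.smul (Real.rpow_pos_of_pos hy _) hc
  refine Set.EqOn.of_subset_closure (f := fun y : ℝ => φ (y ^ p⁻¹ • c))
    (g := fun y : ℝ => y ^ p⁻¹ • φ c) (fun y hy => hy.2 c hc)
    ((hφ.continuousOn.comp (hrpow.smul continuousOn_const) hmaps).mono Set.inter_subset_right)
    ((hrpow.smul continuousOn_const).mono Set.inter_subset_right)
    (fun y hy => ⟨subset_closure hy, hy.1⟩) Set.inter_subset_left ⟨hx, hx_pos⟩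

lemma isHomogeneousAt (hp : 0 < p) (hφ : IsPowerMeanPreserver p φ) {t : ℝ}
    (ht : 0 < t) : IsHomogeneousAt φ t := by
  have hrpow_pos : ∀ {x : ℝ}, 0 < x → 0 < x ^ p⁻¹ := fun hx => Real.rpow_pos_of_pos hx _
  have key := Set.Ioi_zero_subset_of_mul_mem_of_midpoint_mem
    (S := {x : ℝ | 0 < x ∧ IsHomogeneousAt φ (x ^ p⁻¹)})
    ⟨one_pos, by simp [IsHomogeneousAt]⟩
    ⟨by norm_num, by simpa [powerMean_one_zero hp] using hφ.isHomogeneousAt_powerMean_one_zero hp⟩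
    (fun x hx y hy => ⟨mul_pos hx.1 hy.1, by
      rw [Real.mul_rpow hx.1.le hy.1.le]; exact hx.2.mul hy.2 (hrpow_pos hy.1)⟩)
    (fun x hx y hy => ⟨by linarith [hx.1, hy.1], by
      rw [← powerMean_rpow_inv hp.ne' hx.1.le hy.1.le]
      exact hφ.isHomogeneousAt_powerMean hp (hrpow_pos hx.1) (hrpow_pos hy.1) hx.2 hy.2⟩)
    (fun x hx z hz hm => ⟨hz, hφ.isHomogeneousAt_of_powerMean hp (hrpow_pos hx.1) (hrpow_pos hz)
      hx.2 (by rw [powerMean_rpow_inv hp.ne' hx.1.le hz.le]; exact hm.2)⟩)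
    hφ.closure_isHomogeneousAt_rpow_inv_subset
  simpa [Real.rpow_rpow_inv ht.le hp.ne'] using (key (Real.rpow_pos_of_pos ht p)).2

lemma ringInverse_conj (hp : p ≠ 0) (hφ : IsPowerMeanPreserver p φ) :
    IsPowerMeanPreserver (-p) (fun a => (φ a⁻¹ʳ)⁻¹ʳ) where
  continuousOn := continuousOn_inverse_posDefCone.comp
    (hφ.continuousOn.comp continuousOn_inverse_posDefCone bijOn_inverse_posDefCone.mapsTo)
    (hφ.bijOn.mapsTo.comp bijOn_inverse_posDefCone.mapsTo)
  bijOn := bijOn_inverse_posDefCone.comp (hφ.bijOn.comp bijOn_inverse_posDefCone)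
  map_kuboAndoPowerMean a ha b hb := by
    have ha' : IsStrictlyPositive a := ha
    have hb' : IsStrictlyPositive b := hb
    rw [inverse_kuboAndoPowerMean (neg_ne_zero.2 hp) ha' hb', neg_neg,
      hφ.map_kuboAndoPowerMean _ ha'.ringInverse _ hb'.ringInverse,
      inverse_kuboAndoPowerMean hp (hφ.isStrictlyPositive_map ha'.ringInverse)
        (hφ.isStrictlyPositive_map hb'.ringInverse)]

end IsPowerMeanPreserver

theorem kuboAndo_preserver_positively_homogeneous_general (p : ℝ) (hp : p ≠ 0)
    (φ : A → B) (hφc : ContinuousOn φ (posDefCone A))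
    (hφ : Set.BijOn φ (posDefCone A) (posDefCone B))
    (hmean : ∀ a ∈ posDefCone A, ∀ b ∈ posDefCone A,
        φ (kuboAndoPowerMean p a b) = kuboAndoPowerMean p (φ a) (φ b)) :
    ∀ t : ℝ, 0 < t → ∀ a ∈ posDefCone A, φ (t • a) = t • φ a := by
  intro t ht
  have hpres : IsPowerMeanPreserver p φ := ⟨hφc, hφ, hmean⟩
  rcases hp.lt_or_gt with hneg | hpos
  · exact IsHomogeneousAt.of_ringInverse_conj hφ.mapsTo ht
      ((hpres.ringInverse_conj hp).isHomogeneousAt (neg_pos.2 hneg) (inv_pos.2 ht))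
  · exact hpres.isHomogeneousAt hpos ht

/-- A norm-continuous bijection between positive definite cones of unital
C*-algebras which preserves the Kubo–Ando `p`-th power mean (`0 ≠ p ∈ [-1,1]`) is
positively homogeneous. -/
theorem kuboAndo_preserver_positively_homogeneous (p : ℝ) (hp : p ≠ 0)
    (hp' : p ∈ Set.Icc (-1 : ℝ) 1) (φ : A → B) (hφc : ContinuousOn φ (posDefCone A))
    (hφ : Set.BijOn φ (posDefCone A) (posDefCone B))
    (hmean : ∀ a ∈ posDefCone A, ∀ b ∈ posDefCone A,
        φ (kuboAndoPowerMean p a b) = kuboAndoPowerMean p (φ a) (φ b)) :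
    ∀ t : ℝ, 0 < t → ∀ a ∈ posDefCone A, φ (t • a) = t • φ a :=
  kuboAndo_preserver_positively_homogeneous_general p hp φ hφc hφ hmean
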